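/- Let R = K[x1, x2, y1, ..., yq, z1, ..., zs] be a polynomial ring over a field and f ∈ R. Then there exists a subset S of {1,...,q} that is maximum with respect to inclusion (i.e., containing every other such subset) among subsets T such that f ∈ (x1, x2) + (∏_{j∈T} y_j)·R. -/

import Mathlib

/-!
Killing `x₁, x₂` identifies `R ⧸ (x₁, x₂)` with `K[y, z]`, so `f` admits `T` exactly when
`∏_{j ∈ T} y_j` divides the image `g` of `f` there. Distinct variables are non-associate primes,
so this happens iff each `y_j` with `j ∈ T` divides `g`; the maximum is `S = {j | y_j ∣ g}`.
-/

namespace MvPolynomial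

section killCompl

variable {R σ τ : Type*} {f : σ → τ} (hf : Function.Injective f)

theorem killCompl_X_apply [CommSemiring R] (a : σ) :
    killCompl hf (X (f a) : MvPolynomial τ R) = X a := by
  rw [← rename_X, killCompl_rename_app]

theorem killCompl_X_of_notMem [CommSemiring R] {v : τ} (hv : v ∉ Set.range f) :
    killCompl hf (X v : MvPolynomial τ R) = 0 := by
  rw [killCompl, aeval_X, dif_neg hv]

theorem sub_rename_killCompl_mem_span [CommRing R] (p : MvPolynomial τ R) :
    p - rename f (killCompl hf p) ∈ Ideal.span (X '' (Set.range f)ᶜ) := by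
  induction p using MvPolynomial.induction_on with
  | C a => simp
  | add p q hp hq => simpa only [map_add, add_sub_add_comm] using Ideal.add_mem _ hp hq
  | mul_X p v hp =>
    by_cases hv : v ∈ Set.range f
    · obtain ⟨a, rfl⟩ := hv
      rw [map_mul, killCompl_X_apply, map_mul, rename_X, ← sub_mul]
      exact Ideal.mul_mem_right _ _ hp
    · rw [map_mul, killCompl_X_of_notMem hf hv, mul_zero, map_zero, sub_zero]
      exact Ideal.mul_mem_left _ _ (Ideal.subset_span ⟨v, hv, rfl⟩)

theorem ker_killCompl [CommRing R] :
    RingHom.ker (killCompl (R := R) hf) = Ideal.span (X '' (Set.range f)ᶜ) := by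
  apply le_antisymm
  · intro p hp
    have h := sub_rename_killCompl_mem_span hf p
    rwa [RingHom.mem_ker.mp hp, map_zero, sub_zero] at h
  · rw [Ideal.span_le]
    rintro _ ⟨v, hv, rfl⟩
    exact killCompl_X_of_notMem hf hv

end killCompl

theorem isRelPrime_X_X {R σ : Type*} [CommRing R] [IsDomain R]
    {i j : σ} (h : i ≠ j) : IsRelPrime (X i : MvPolynomial σ R) (X j) :=
  (X_prime (R := R)).irreducible.isRelPrime_iff_not_dvd.mpr (X_dvd_X.not.mpr h)

theorem prod_X_dvd_iff {R σ ι : Type*} [CommRing R] [IsDomain R] [UniqueFactorizationMonoid R]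
    {g : ι → σ} (hg : Function.Injective g) (t : Finset ι) (p : MvPolynomial σ R) :
    (∏ i ∈ t, X (g i)) ∣ p ↔ ∀ i ∈ t, X (g i) ∣ p :=
  ⟨fun h _ hi => (t.dvd_prod_of_mem (fun i => X (g i)) hi).trans h,
    Finset.prod_dvd_of_isRelPrime fun _ _ _ _ hij => isRelPrime_X_X (hg.ne hij)⟩

end MvPolynomial

theorem Ideal.mem_ker_sup_span_singleton_iff {A B F : Type*} [CommRing A] [CommRing B]
    [FunLike F A B] [RingHomClass F A B] {φ : F} (hφ : Function.Surjective φ) {a b : A} :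
    a ∈ RingHom.ker φ ⊔ Ideal.span {b} ↔ φ b ∣ φ a := by
  rw [sup_comm, RingHom.ker_eq_comap_bot, ← Ideal.comap_map_of_surjective φ hφ, Ideal.mem_comap,
    Ideal.map_span, Set.image_singleton, Ideal.mem_span_singleton]

open MvPolynomial

/-- In `R = K[x₁, x₂, y₁,…,y_q, z₁,…,z_s]`, for any `f` there is a subset `S`
of `{1,…,q}` which is a maximum (contains every other such subset) among
subsets `T` with `f ∈ (x₁,x₂) + (∏_{j∈T} y_j)·R`. -/
theorem stmt_3 (K : Type*) [Field K] (q s : ℕ)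
    (f : MvPolynomial (Fin 2 ⊕ Fin q ⊕ Fin s) K) :
    let R := MvPolynomial (Fin 2 ⊕ Fin q ⊕ Fin s) K
    let x : Fin 2 → R := fun i => X (Sum.inl i)
    let y : Fin q → R := fun j => X (Sum.inr (Sum.inl j))
    let admits : Finset (Fin q) → Prop := fun T =>
      f ∈ Ideal.span {x 0, x 1} ⊔ Ideal.span {∏ j ∈ T, y j}
    ∃ S : Finset (Fin q), admits S ∧ ∀ T, admits T → T ⊆ S := by
  classical
  intro R x y admits
  set φ := killCompl (R := K) (Sum.inr_injective : Function.Injective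
    (Sum.inr : Fin q ⊕ Fin s → Fin 2 ⊕ Fin q ⊕ Fin s))
  have hker : RingHom.ker φ = Ideal.span {x 0, x 1} := by
    rw [ker_killCompl, Set.compl_range_inr]
    congr 1
    ext p
    simp [x, Fin.exists_fin_two, eq_comm]
  have hadmits (T : Finset (Fin q)) : admits T ↔ (∏ j ∈ T, X (Sum.inl j)) ∣ φ f := by
    have hsurj : Function.Surjective φ := fun p => ⟨_, killCompl_rename_app _ p⟩
    simp only [admits, ← hker, Ideal.mem_ker_sup_span_singleton_iff hsurj, map_prod, y, φ,
      killCompl_X_apply]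
  refine ⟨({j | X (Sum.inl j) ∣ φ f} : Finset (Fin q)), ?_, fun T hT j hj => ?_⟩
  · rw [hadmits, prod_X_dvd_iff Sum.inl_injective]
    simp
  · rw [hadmits, prod_X_dvd_iff Sum.inl_injective] at hT
    simpa using hT j hj
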